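/- arXiv:1911.06819 — 2 statements merged into one kernel-verified Lean document; each statement's English description precedes it below -/
import Mathlib

section
/- Let d ≥ 1, let M : ℝ → (d×d real matrices) be differentiable at 0 with M(0) = I (the identity matrix) and M'(0) = A, and let n ∈ ℝ^d with ‖n‖ = 1. Then the scalar function ω(t) := det(M(t)) · ‖(M(t)ᵀ)⁻¹ n‖, defined for t near 0, is differentiable at 0 with derivative ω'(0) = tr(A) − ⟨A n, n⟩. -/
open Matrix
open scoped RealInnerProductSpace

attribute [local instance] Matrix.normedAddCommGroup Matrix.normedSpace

/-- Leibniz-formula derivative of the determinant of a matrix-valued function, given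
entrywise derivatives. -/
private theorem det_hasDerivAt_aux {d : ℕ} {N : ℝ → Matrix (Fin d) (Fin d) ℝ}
    {B : Matrix (Fin d) (Fin d) ℝ} {t0 : ℝ}
    (h : ∀ i j, HasDerivAt (fun t => N t i j) (B i j) t0) :
    HasDerivAt (fun t => (N t).det)
      (∑ σ : Equiv.Perm (Fin d), ((Equiv.Perm.sign σ : ℤ) : ℝ) *
        ∑ i, (∏ j ∈ Finset.univ.erase i, N t0 (σ j) j) * B (σ i) i) t0 := by
  have key : ∀ σ : Equiv.Perm (Fin d), HasDerivAt
      (fun t => ((Equiv.Perm.sign σ : ℤ) : ℝ) * ∏ i, N t (σ i) i)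
      (((Equiv.Perm.sign σ : ℤ) : ℝ) *
        ∑ i, (∏ j ∈ Finset.univ.erase i, N t0 (σ j) j) * B (σ i) i) t0 := by
    intro σ
    have hp := HasDerivAt.finset_prod (u := Finset.univ) (f := fun i t => N t (σ i) i)
      (f' := fun i => B (σ i) i) (x := t0) (fun i _ => h (σ i) i)
    simpa [smul_eq_mul] using hp.const_mul (((Equiv.Perm.sign σ : ℤ) : ℝ))
  have hs := HasDerivAt.fun_sum (u := Finset.univ) (fun σ _ => key σ)
  have : (fun t => (N t).det)
      = fun t => ∑ σ : Equiv.Perm (Fin d), ((Equiv.Perm.sign σ : ℤ) : ℝ) * ∏ i, N t (σ i) i := by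
    funext t; rw [Matrix.det_apply']
  rw [this]
  exact hs

/-- The Leibniz derivative expression evaluated at the identity matrix is the trace. -/
private theorem sum_perm_eq_trace {d : ℕ} (B : Matrix (Fin d) (Fin d) ℝ) :
    (∑ σ : Equiv.Perm (Fin d), ((Equiv.Perm.sign σ : ℤ) : ℝ) *
        ∑ i, (∏ j ∈ Finset.univ.erase i, (1 : Matrix (Fin d) (Fin d) ℝ) (σ j) j) * B (σ i) i)
      = B.trace := by
  rw [Finset.sum_eq_single (1 : Equiv.Perm (Fin d))]
  · simp [Matrix.trace, Matrix.diag, Matrix.one_apply]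
  · intro σ _ hσ
    obtain ⟨j0, hj0⟩ : ∃ j0, σ j0 ≠ j0 := by
      by_contra hc; push_neg at hc; exact hσ (Equiv.ext hc)
    have hz : ∀ i : Fin d,
        (∏ j ∈ Finset.univ.erase i, (1 : Matrix (Fin d) (Fin d) ℝ) (σ j) j) = 0 := by
      intro i
      by_cases hij : i = j0
      · subst hij
        have hk : σ⁻¹ i ≠ i := fun h => hj0 (by conv_lhs => rw [← h]; simp)
        refine Finset.prod_eq_zero (i := σ⁻¹ i) (Finset.mem_erase.mpr ⟨hk, Finset.mem_univ _⟩) ?_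
        have : σ (σ⁻¹ i) = i := by simp
        rw [this]
        exact Matrix.one_apply_ne (Ne.symm hk)
      · refine Finset.prod_eq_zero (i := j0) (by simp [Finset.mem_erase, Ne.symm hij]) ?_
        exact Matrix.one_apply_ne hj0
    simp [hz]
  · simp

/-- If `M : ℝ → ℝ^{d×d}` is differentiable at `0` with `M 0 = I` and `M' 0 = A`, and `n` is a
Euclidean unit vector, then `ω(t) := det(M t) * ‖((M t)ᵀ)⁻¹ n‖` is differentiable at `0` with
`ω'(0) = tr A − ⟨A n, n⟩`. -/
theorem det_mul_norm_transpose_inv_mulVec_hasDerivAt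
    (d : ℕ) (hd : 1 ≤ d)
    (M : ℝ → Matrix (Fin d) (Fin d) ℝ) (A : Matrix (Fin d) (Fin d) ℝ)
    (hM : HasDerivAt M A 0) (hM0 : M 0 = 1)
    (n : EuclideanSpace ℝ (Fin d)) (hn : ‖n‖ = 1) :
    HasDerivAt
      (fun t => (M t).det *
        ‖(EuclideanSpace.equiv (Fin d) ℝ).symm
          (((M t)ᵀ)⁻¹ *ᵥ (EuclideanSpace.equiv (Fin d) ℝ) n)‖)
      (A.trace - ⟪(EuclideanSpace.equiv (Fin d) ℝ).symm (A *ᵥ (EuclideanSpace.equiv (Fin d) ℝ) n), n⟫) 0 := by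
  classical
  set n' : Fin d → ℝ := (EuclideanSpace.equiv (Fin d) ℝ) n with hn'def
  have hcoe : ∀ i, n' i = n i := fun i => rfl
  -- entrywise derivatives of M
  have hA : ∀ i j, HasDerivAt (fun t => M t i j) (A i j) 0 := by
    intro i j
    let L1 : (Fin d → Fin d → ℝ) →L[ℝ] (Fin d → ℝ) := ContinuousLinearMap.proj i
    let L2 : (Fin d → ℝ) →L[ℝ] ℝ := ContinuousLinearMap.proj j
    exact ((L2.comp L1).hasFDerivAt).comp_hasDerivAt 0 hM
  -- determinant derivative
  have hdet : HasDerivAt (fun t => (M t).det) A.trace 0 := by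
    have h := det_hasDerivAt_aux hA
    rwa [hM0, sum_perm_eq_trace] at h
  have hdet0 : (M 0).det = 1 := by rw [hM0]; simp
  -- differentiability of adjugate entries
  have hadj : ∀ i j, DifferentiableAt ℝ (fun t => (adjugate ((M t)ᵀ)) i j) 0 := by
    intro i j
    have h1 : ∀ k l, HasDerivAt (fun t => ((M t)ᵀ.updateRow j (Pi.single i 1)) k l)
        (if k = j then 0 else A l k) 0 := by
      intro k l
      by_cases hk : k = j
      · simpa [Matrix.updateRow_apply, hk] using hasDerivAt_const (0 : ℝ) (Pi.single (M := fun _ : Fin d => ℝ) i 1 l)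
      · simpa [Matrix.updateRow_apply, hk] using hA l k
    have h2 := det_hasDerivAt_aux h1
    have heq : (fun t => (adjugate ((M t)ᵀ)) i j)
        = fun t => ((M t)ᵀ.updateRow j (Pi.single i 1)).det := by
      funext t; rw [Matrix.adjugate_apply]
    rw [heq]
    exact h2.differentiableAt
  -- differentiability of the components of v t = ((M t)ᵀ)⁻¹ *ᵥ n'
  have hv : ∀ i, DifferentiableAt ℝ (fun t => (((M t)ᵀ)⁻¹ *ᵥ n') i) 0 := by
    intro i
    have heq : (fun t => (((M t)ᵀ)⁻¹ *ᵥ n') i)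
        = fun t => ((M t).det)⁻¹ * ∑ j, adjugate ((M t)ᵀ) i j * n' j := by
      funext t
      rw [Matrix.inv_def, Matrix.smul_mulVec, Matrix.det_transpose, Ring.inverse_eq_inv']
      simp [Matrix.mulVec, dotProduct]
    rw [heq]
    exact (hdet.differentiableAt.inv (by rw [hdet0]; exact one_ne_zero)).mul
      (DifferentiableAt.fun_sum fun j _ => (hadj i j).mul_const _)
  set w : Fin d → ℝ := fun i => deriv (fun t => (((M t)ᵀ)⁻¹ *ᵥ n') i) 0 with hwdef
  have hw : ∀ i, HasDerivAt (fun t => (((M t)ᵀ)⁻¹ *ᵥ n') i) (w i) 0 :=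
    fun i => (hv i).hasDerivAt
  -- value at 0
  have hv0 : ∀ i, (((M 0)ᵀ)⁻¹ *ᵥ n') i = n' i := by
    intro i; rw [hM0]; simp
  -- eventual identity
  have hinv : ∀ᶠ t in nhds 0, (M t)ᵀ *ᵥ (((M t)ᵀ)⁻¹ *ᵥ n') = n' := by
    have hne : ∀ᶠ t in nhds 0, (M t).det ≠ 0 :=
      hdet.continuousAt.eventually_ne (by rw [hdet0]; exact one_ne_zero)
    filter_upwards [hne] with t ht
    rw [Matrix.mulVec_mulVec,
      Matrix.mul_nonsing_inv _ (by rw [Matrix.det_transpose]; exact isUnit_iff_ne_zero.mpr ht),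
      Matrix.one_mulVec]
  -- compute w
  have hw_eq : ∀ i, w i = -∑ j, A j i * n' j := by
    intro i
    have h1 : HasDerivAt (fun t => ∑ j, M t j i * (((M t)ᵀ)⁻¹ *ᵥ n') j)
        (∑ j, (A j i * n' j + (1 : Matrix (Fin d) (Fin d) ℝ) j i * w j)) 0 := by
      apply HasDerivAt.fun_sum
      intro j _
      have hm := (hA j i).mul (hw j)
      rw [hv0 j, hM0] at hm
      exact hm
    have h2 : HasDerivAt (fun t => ∑ j, M t j i * (((M t)ᵀ)⁻¹ *ᵥ n') j) 0 0 := by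
      have heq : (fun t => ∑ j, M t j i * (((M t)ᵀ)⁻¹ *ᵥ n') j) =ᶠ[nhds 0]
          fun _ => n' i := by
        filter_upwards [hinv] with t ht
        calc ∑ j, M t j i * (((M t)ᵀ)⁻¹ *ᵥ n') j
            = ((M t)ᵀ *ᵥ (((M t)ᵀ)⁻¹ *ᵥ n')) i := by
              simp [Matrix.mulVec, dotProduct, Matrix.transpose_apply]
          _ = n' i := by rw [ht]
      exact (hasDerivAt_const (0:ℝ) (n' i)).congr_of_eventuallyEq heq
    have h3 := h1.unique h2
    have h4 : ∑ j, (1 : Matrix (Fin d) (Fin d) ℝ) j i * w j = w i := by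
      simp [Matrix.one_apply]
    rw [Finset.sum_add_distrib, h4] at h3
    linarith [h3]
  -- derivative of the squared norm
  have hq : HasDerivAt (fun t => ∑ i, (((M t)ᵀ)⁻¹ *ᵥ n') i ^ 2)
      (∑ i, 2 * n' i * w i) 0 := by
    apply HasDerivAt.fun_sum
    intro i _
    have := (hw i).fun_pow 2
    rw [hv0 i] at this
    simpa using this
  have hq0 : ∑ i, (((M 0)ᵀ)⁻¹ *ᵥ n') i ^ 2 = 1 := by
    have h1 : ∑ i, n' i ^ 2 = ‖n‖ ^ 2 := by
      rw [EuclideanSpace.norm_eq, Real.sq_sqrt (Finset.sum_nonneg fun i _ => sq_nonneg _)]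
      simp [Real.norm_eq_abs, sq_abs, hcoe]
    simp only [hv0]
    rw [h1, hn, one_pow]
  -- derivative of the norm
  have hsqrt : HasDerivAt (fun t => Real.sqrt (∑ i, (((M t)ᵀ)⁻¹ *ᵥ n') i ^ 2))
      (1 / (2 * Real.sqrt (∑ i, (((M 0)ᵀ)⁻¹ *ᵥ n') i ^ 2)) * ∑ i, 2 * n' i * w i) 0 := by
    exact (Real.hasDerivAt_sqrt (by rw [hq0]; exact one_ne_zero)).comp 0 hq
  have hfinal := hdet.mul hsqrt
  -- rewrite target function
  have hfun : (fun t => (M t).det *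
        ‖(EuclideanSpace.equiv (Fin d) ℝ).symm (((M t)ᵀ)⁻¹ *ᵥ n')‖)
      = fun t => (M t).det * Real.sqrt (∑ i, (((M t)ᵀ)⁻¹ *ᵥ n') i ^ 2) := by
    funext t
    congr 1
    rw [EuclideanSpace.norm_eq]
    congr 1
    refine Finset.sum_congr rfl fun i _ => ?_
    rw [Real.norm_eq_abs, sq_abs]
    rfl
  -- the inner product
  have hinner : ⟪(EuclideanSpace.equiv (Fin d) ℝ).symm (A *ᵥ n'), n⟫
      = ∑ i, (∑ j, A i j * n' j) * n' i := by
    simp [PiLp.inner_apply, RCLike.inner_apply, Matrix.mulVec, dotProduct, hcoe]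
    exact Finset.sum_congr rfl fun _ _ => mul_comm _ _
  -- sum identity
  have hsum : ∑ i, 2 * n' i * w i = -2 * ∑ i, (∑ j, A i j * n' j) * n' i := by
    calc ∑ i, 2 * n' i * w i
        = ∑ i, ∑ j, (-2) * (A j i * n' j * n' i) := by
          refine Finset.sum_congr rfl fun i _ => ?_
          rw [hw_eq i, mul_neg, Finset.mul_sum, ← Finset.sum_neg_distrib]
          exact Finset.sum_congr rfl fun j _ => by ring
      _ = ∑ j, ∑ i, (-2) * (A j i * n' j * n' i) := Finset.sum_comm
      _ = -2 * ∑ j, (∑ i, A j i * n' i) * n' j := by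
          rw [Finset.mul_sum]
          refine Finset.sum_congr rfl fun j _ => ?_
          rw [Finset.sum_mul, Finset.mul_sum]
          exact Finset.sum_congr rfl fun i _ => by ring
  rw [hfun]
  refine hfinal.congr_deriv ?_
  rw [hinner, hq0, hdet0, Real.sqrt_one, hsum]
  ring
end

section
/- Let h > 0 and let φ_h(z) := (4/h²) z (h − z). Let Ω̄ ⊂ ℝ² be a measurable set and let ū, v̄ : ℝ² → ℝ² be continuously differentiable functions such that the functions Dū : Dv̄ (the Frobenius inner product of the Jacobians) and ū · v̄ are Lebesgue integrable over Ω̄. Define u, v : ℝ³ → ℝ³ by u(x, y, z) := φ_h(z) (ū₁(x, y), ū₂(x, y), 0) and v(x, y, z) := φ_h(z) (v̄₁(x, y), v̄₂(x, y), 0). Then ∫_{Ω̄ × (0,h)} Du : Dv d(x,y,z) = ∫_{Ω̄} (8h/15) Dū : Dv̄ + (16/(3h)) ū · v̄ d(x,y). -/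
open MeasureTheory

/-- The parabolic profile `φ_h(z) = (4/h²) z (h − z)`. -/
noncomputable def parabolicProfile (h z : ℝ) : ℝ := 4 / h ^ 2 * (z * (h - z))

/-- The cylinder `Ω̄ × (0, h) ⊂ ℝ³` over a planar set `Ω̄ ⊂ ℝ²`. -/
def cylinder (Ω : Set (Fin 2 → ℝ)) (h : ℝ) : Set (Fin 3 → ℝ) :=
  {p | ![p 0, p 1] ∈ Ω ∧ p 2 ∈ Set.Ioo 0 h}

/-- The vector field `(x,y,z) ↦ φ(z) (ū₁(x,y), ū₂(x,y), 0)` on `ℝ³` built from a profile `φ`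
and a planar vector field `ū`. -/
noncomputable def profileLift (φ : ℝ → ℝ) (ubar : (Fin 2 → ℝ) → Fin 2 → ℝ)
    (p : Fin 3 → ℝ) : Fin 3 → ℝ :=
  ![φ (p 2) * ubar ![p 0, p 1] 0, φ (p 2) * ubar ![p 0, p 1] 1, 0]

/-- The Frobenius inner product `Du : Dv` of the Jacobians of `u, v : ℝ³ → ℝ³` at `p`. -/
noncomputable def frobenius3 (u v : (Fin 3 → ℝ) → Fin 3 → ℝ) (p : Fin 3 → ℝ) : ℝ :=
  ∑ i : Fin 3, ∑ j : Fin 3,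
    fderiv ℝ u p (Pi.single j 1) i * fderiv ℝ v p (Pi.single j 1) i

/-- The Frobenius inner product `Dū : Dv̄` of the Jacobians of `ū, v̄ : ℝ² → ℝ²` at `w`. -/
noncomputable def frobenius2 (u v : (Fin 2 → ℝ) → Fin 2 → ℝ) (w : Fin 2 → ℝ) : ℝ :=
  ∑ i : Fin 2, ∑ j : Fin 2,
    fderiv ℝ u w (Pi.single j 1) i * fderiv ℝ v w (Pi.single j 1) i

noncomputable def projL : (Fin 3 → ℝ) →L[ℝ] (Fin 2 → ℝ) :=
  ContinuousLinearMap.pi ![ContinuousLinearMap.proj 0, ContinuousLinearMap.proj 1]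

lemma projL_apply (p : Fin 3 → ℝ) : projL p = ![p 0, p 1] := by
  funext j; fin_cases j <;> rfl

noncomputable def liftDeriv (φ : ℝ → ℝ) (φ' : ℝ) (ubar : (Fin 2 → ℝ) → Fin 2 → ℝ)
    (p : Fin 3 → ℝ) : (Fin 3 → ℝ) →L[ℝ] (Fin 3 → ℝ) :=
  ContinuousLinearMap.pi
    ![φ (p 2) • ((ContinuousLinearMap.proj 0).comp
        ((fderiv ℝ ubar ![p 0, p 1]).comp projL)) + ubar ![p 0, p 1] 0 •
        (φ' • (ContinuousLinearMap.proj 2 : (Fin 3 → ℝ) →L[ℝ] ℝ)),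
      φ (p 2) • ((ContinuousLinearMap.proj 1).comp
        ((fderiv ℝ ubar ![p 0, p 1]).comp projL)) + ubar ![p 0, p 1] 1 •
        (φ' • (ContinuousLinearMap.proj 2 : (Fin 3 → ℝ) →L[ℝ] ℝ)),
      0]

lemma hasFDerivAt_profileLift (φ : ℝ → ℝ) (φ' : ℝ) (ubar : (Fin 2 → ℝ) → Fin 2 → ℝ)
    (hu : ContDiff ℝ 1 ubar) (p : Fin 3 → ℝ) (hφ : HasDerivAt φ φ' (p 2)) :
    HasFDerivAt (profileLift φ ubar) (liftDeriv φ φ' ubar p) p := by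
  have hz : HasFDerivAt (fun q : Fin 3 → ℝ => φ (q 2))
      (φ' • (ContinuousLinearMap.proj 2 : (Fin 3 → ℝ) →L[ℝ] ℝ)) p :=
    hφ.comp_hasFDerivAt p (hasFDerivAt_apply 2 p)
  have hL : HasFDerivAt (fun q : Fin 3 → ℝ => ubar (projL q))
      ((fderiv ℝ ubar (projL p)).comp projL) p :=
    ((hu.differentiable one_ne_zero (projL p)).hasFDerivAt).comp p projL.hasFDerivAt
  have hcomp : ∀ i : Fin 2, HasFDerivAt (fun q : Fin 3 → ℝ => ubar (projL q) i)
      ((ContinuousLinearMap.proj i).comp ((fderiv ℝ ubar (projL p)).comp projL)) p :=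
    fun i => by have := (hasFDerivAt_apply i (ubar (projL p))).comp p hL; exact this
  have hmul : ∀ i : Fin 2, HasFDerivAt (fun q : Fin 3 → ℝ => φ (q 2) * ubar (projL q) i)
      (φ (p 2) • ((ContinuousLinearMap.proj i).comp ((fderiv ℝ ubar (projL p)).comp projL))
        + ubar (projL p) i • (φ' • (ContinuousLinearMap.proj 2 : (Fin 3 → ℝ) →L[ℝ] ℝ))) p :=
    fun i => hz.mul (hcomp i)
  apply hasFDerivAt_pi''
  intro i
  rw [liftDeriv, ContinuousLinearMap.proj_pi]
  fin_cases i
  · have := hmul 0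
    simp only [projL_apply] at this
    exact this
  · have := hmul 1
    simp only [projL_apply] at this
    exact this
  · have : HasFDerivAt (fun _ : Fin 3 → ℝ => (0:ℝ)) (0 : (Fin 3 → ℝ) →L[ℝ] ℝ) p := hasFDerivAt_const (0:ℝ) p
    exact this

lemma projL_single0 : projL (Pi.single (0:Fin 3) (1:ℝ)) = Pi.single (0:Fin 2) 1 := by
  funext j; fin_cases j <;> simp [projL_apply, Pi.single_apply]

lemma projL_single1 : projL (Pi.single (1:Fin 3) (1:ℝ)) = Pi.single (1:Fin 2) 1 := by
  funext j; fin_cases j <;> simp [projL_apply, Pi.single_apply]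

lemma projL_single2 : projL (Pi.single (2:Fin 3) (1:ℝ)) = 0 := by
  funext j; fin_cases j <;> simp [projL_apply, Pi.single_apply]

lemma frobenius3_profileLift (φ : ℝ → ℝ) (φ' : ℝ)
    (ubar vbar : (Fin 2 → ℝ) → Fin 2 → ℝ)
    (hu : ContDiff ℝ 1 ubar) (hv : ContDiff ℝ 1 vbar)
    (p : Fin 3 → ℝ) (hφ : HasDerivAt φ φ' (p 2)) :
    frobenius3 (profileLift φ ubar) (profileLift φ vbar) p
      = (φ (p 2))^2 * frobenius2 ubar vbar ![p 0, p 1]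
        + φ'^2 * ∑ i : Fin 2, ubar ![p 0, p 1] i * vbar ![p 0, p 1] i := by
  rw [frobenius3, (hasFDerivAt_profileLift φ φ' ubar hu p hφ).fderiv,
      (hasFDerivAt_profileLift φ φ' vbar hv p hφ).fderiv]
  simp only [liftDeriv, frobenius2, Fin.sum_univ_three, Fin.sum_univ_two,
    ContinuousLinearMap.pi_apply, Matrix.cons_val_zero, Matrix.cons_val_one, Matrix.head_cons,
    Matrix.cons_val_two, Matrix.tail_cons, ContinuousLinearMap.add_apply,
    ContinuousLinearMap.coe_smul', Pi.smul_apply, ContinuousLinearMap.coe_comp',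
    Function.comp_apply, ContinuousLinearMap.proj_apply, ContinuousLinearMap.zero_apply,
    projL_single0, projL_single1, projL_single2, map_zero, smul_eq_mul,
    Pi.single_eq_same, ne_eq, Pi.single_eq_of_ne, Pi.zero_apply]
  norm_num [Pi.single_apply, Fin.ext_iff]
  ring

lemma hasDerivAt_parabolic (h z : ℝ) :
    HasDerivAt (parabolicProfile h) (4 / h ^ 2 * (h - 2 * z)) z := by
  have h1 : HasDerivAt (fun z : ℝ => 4 / h ^ 2 * (z * (h - z)))
      (4 / h ^ 2 * (1 * (h - z) + z * (0 - 1))) z :=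
    ((hasDerivAt_id z).mul ((hasDerivAt_const z h).sub (hasDerivAt_id z))).const_mul _
  have : HasDerivAt (fun z : ℝ => 4 / h ^ 2 * (z * (h - z))) (4 / h ^ 2 * (h - 2 * z)) z := by
    convert h1 using 1; ring
  exact this

lemma cont_parabolic_sq (h : ℝ) : Continuous (fun z => (parabolicProfile h z) ^ 2) := by
  unfold parabolicProfile; fun_prop

lemma cont_deriv_sq (h : ℝ) : Continuous (fun z : ℝ => (4 / h ^ 2 * (h - 2 * z)) ^ 2) := by
  fun_prop

lemma int_parabolic_sq (h : ℝ) (hh : 0 < h) :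
    ∫ z in Set.Ioo 0 h, (parabolicProfile h z) ^ 2 = 8 * h / 15 := by
  rw [← integral_Ioc_eq_integral_Ioo, ← intervalIntegral.integral_of_le hh.le]
  have key : ∀ z ∈ Set.uIcc (0:ℝ) h, HasDerivAt
      (fun z => 16 / h ^ 4 * (h ^ 2 * z ^ 3 / 3 - h * z ^ 4 / 2 + z ^ 5 / 5))
      ((parabolicProfile h z) ^ 2) z := by
    intro z _
    have h1 : HasDerivAt
        (fun z : ℝ => 16 / h ^ 4 * (h ^ 2 * z ^ 3 / 3 - h * z ^ 4 / 2 + z ^ 5 / 5))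
        (16 / h ^ 4 * (h ^ 2 * (3 * z ^ 2) / 3 - h * (4 * z ^ 3) / 2 + (5 * z ^ 4) / 5)) z := by
      have := ((((hasDerivAt_pow 3 z).const_mul (h ^ 2)).div_const 3).sub
        (((hasDerivAt_pow 4 z).const_mul h).div_const 2)).add
        ((hasDerivAt_pow 5 z).div_const 5) |>.const_mul (16 / h ^ 4)
      exact this.congr_deriv (by push_cast; ring)
    convert h1 using 1
    unfold parabolicProfile; ring
  rw [intervalIntegral.integral_eq_sub_of_hasDerivAt key
    ((cont_parabolic_sq h).intervalIntegrable 0 h)]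
  field_simp
  ring

lemma int_deriv_sq (h : ℝ) (hh : 0 < h) :
    ∫ z in Set.Ioo 0 h, (4 / h ^ 2 * (h - 2 * z)) ^ 2 = 16 / (3 * h) := by
  rw [← integral_Ioc_eq_integral_Ioo, ← intervalIntegral.integral_of_le hh.le]
  have key : ∀ z ∈ Set.uIcc (0:ℝ) h, HasDerivAt
      (fun z => 16 / h ^ 4 * (h ^ 2 * z - 2 * h * z ^ 2 + 4 * z ^ 3 / 3))
      ((4 / h ^ 2 * (h - 2 * z)) ^ 2) z := by
    intro z _
    have h1 : HasDerivAt
        (fun z : ℝ => 16 / h ^ 4 * (h ^ 2 * z - 2 * h * z ^ 2 + 4 * z ^ 3 / 3))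
        (16 / h ^ 4 * (h ^ 2 * 1 - 2 * h * (2 * z) + 4 * (3 * z ^ 2) / 3)) z := by
      have := (((hasDerivAt_id z).const_mul (h ^ 2)).sub
        (((hasDerivAt_pow 2 z).const_mul (2 * h)))).add
        (((hasDerivAt_pow 3 z).const_mul 4).div_const 3) |>.const_mul (16 / h ^ 4)
      exact this.congr_deriv (by push_cast; ring)
    convert h1 using 1
    ring
  rw [intervalIntegral.integral_eq_sub_of_hasDerivAt key
    ((cont_deriv_sq h).intervalIntegrable 0 h)]
  field_simp
  ring


set_option maxHeartbeats 1000000 in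
/-- Dimension reduction of the viscous term: for velocities with the parabolic profile
`u(x,y,z) = (4/h²) z(h−z) (ū(x,y), 0)`,
`∫_{Ω̄×(0,h)} Du : Dv = ∫_{Ω̄} (8h/15) Dū : Dv̄ + (16/(3h)) ū · v̄`. -/
theorem dimension_reduction_viscous_term
    (h : ℝ) (hh : 0 < h)
    (Ω : Set (Fin 2 → ℝ)) (hΩ : MeasurableSet Ω)
    (ubar vbar : (Fin 2 → ℝ) → Fin 2 → ℝ)
    (hu : ContDiff ℝ 1 ubar) (hv : ContDiff ℝ 1 vbar)
    (hint1 : IntegrableOn (fun w => frobenius2 ubar vbar w) Ω)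
    (hint2 : IntegrableOn (fun w => ∑ i : Fin 2, ubar w i * vbar w i) Ω) :
    ∫ p in cylinder Ω h,
        frobenius3 (profileLift (parabolicProfile h) ubar)
          (profileLift (parabolicProfile h) vbar) p
      = ∫ w in Ω, ((8 * h / 15) * frobenius2 ubar vbar w
          + (16 / (3 * h)) * ∑ i : Fin 2, ubar w i * vbar w i) := by
  set e := MeasurableEquiv.piFinSuccAbove (fun _ : Fin 3 => ℝ) 2 with he
  set g : ℝ × (Fin 2 → ℝ) → ℝ := fun q =>
    (parabolicProfile h q.1) ^ 2 * frobenius2 ubar vbar q.2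
      + (4 / h ^ 2 * (h - 2 * q.1)) ^ 2 * ∑ i : Fin 2, ubar q.2 i * vbar q.2 i with hg
  have hsucc : ∀ p : Fin 3 → ℝ, (fun j => p ((2:Fin 3).succAbove j)) = ![p 0, p 1] := by
    intro p; funext j; fin_cases j <;> rfl
  have hep : ∀ p : Fin 3 → ℝ, e p = (p 2, ![p 0, p 1]) := by
    intro p
    rw [he, MeasurableEquiv.piFinSuccAbove_apply]
    exact Prod.ext rfl (hsucc p)
  have hpt : ∀ p : Fin 3 → ℝ,
      frobenius3 (profileLift (parabolicProfile h) ubar)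
        (profileLift (parabolicProfile h) vbar) p = g (e p) := by
    intro p
    rw [hep p, hg,
      frobenius3_profileLift (parabolicProfile h) (4 / h ^ 2 * (h - 2 * p 2)) ubar vbar hu hv p
        (hasDerivAt_parabolic h (p 2))]
  have hcyl : cylinder Ω h = e ⁻¹' (Set.Ioo 0 h ×ˢ Ω) := by
    ext p
    simp only [_root_.cylinder, Set.mem_setOf_eq, Set.mem_preimage, hep p, Set.mem_prod]
    tauto
  have h1 : Integrable (fun z => (parabolicProfile h z) ^ 2)
      (volume.restrict (Set.Ioo 0 h)) :=
    ((cont_parabolic_sq h).integrableOn_Icc).mono_set Set.Ioo_subset_Icc_self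
  have h2 : Integrable (fun z : ℝ => (4 / h ^ 2 * (h - 2 * z)) ^ 2)
      (volume.restrict (Set.Ioo 0 h)) :=
    ((cont_deriv_sq h).integrableOn_Icc).mono_set Set.Ioo_subset_Icc_self
  calc ∫ p in cylinder Ω h,
        frobenius3 (profileLift (parabolicProfile h) ubar)
          (profileLift (parabolicProfile h) vbar) p
      = ∫ p in e ⁻¹' (Set.Ioo 0 h ×ˢ Ω), g (e p) := by
        rw [hcyl]; exact setIntegral_congr_fun ((measurableSet_Ioo.prod hΩ).preimage e.measurable) (fun p _ => hpt p)
    _ = ∫ q in Set.Ioo 0 h ×ˢ Ω, g q := by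
        exact (volume_preserving_piFinSuccAbove (fun _ : Fin 3 => ℝ) 2).setIntegral_preimage_emb
          (MeasurableEquiv.measurableEmbedding e) g _
    _ = ∫ q, g q ∂((volume.restrict (Set.Ioo 0 h)).prod (volume.restrict Ω)) := by
        rw [Measure.volume_eq_prod, Measure.prod_restrict]
    _ = (∫ z in Set.Ioo 0 h, (parabolicProfile h z) ^ 2) * (∫ w in Ω, frobenius2 ubar vbar w)
        + (∫ z in Set.Ioo 0 h, (4 / h ^ 2 * (h - 2 * z)) ^ 2)
          * (∫ w in Ω, ∑ i : Fin 2, ubar w i * vbar w i) := by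
        rw [hg]
        rw [integral_add (h1.mul_prod hint1) (h2.mul_prod hint2),
          integral_prod_mul (fun z => (parabolicProfile h z) ^ 2)
            (fun w => frobenius2 ubar vbar w),
          integral_prod_mul (fun z : ℝ => (4 / h ^ 2 * (h - 2 * z)) ^ 2)
            (fun w => ∑ i : Fin 2, ubar w i * vbar w i)]
    _ = (8 * h / 15) * (∫ w in Ω, frobenius2 ubar vbar w)
        + (16 / (3 * h)) * (∫ w in Ω, ∑ i : Fin 2, ubar w i * vbar w i) := by
        rw [int_parabolic_sq h hh, int_deriv_sq h hh]
    _ = ∫ w in Ω, ((8 * h / 15) * frobenius2 ubar vbar w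
          + (16 / (3 * h)) * ∑ i : Fin 2, ubar w i * vbar w i) := by
        rw [integral_add (hint1.const_mul _) (hint2.const_mul _),
          integral_const_mul, integral_const_mul]
end
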